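/- Define u₁(ρ) = ρ⁻⁵(1+ρ)^{−1/2}(12 + 6ρ + ρ² + 2ρ³) and u₂(ρ) = ρ⁻⁵(1−ρ)^{−1/2}(12 − 6ρ + ρ² − 2ρ³). Then both u₁ and u₂ solve the ODE (1−ρ²)u″(ρ) + (6/ρ − 9ρ)u′(ρ) − (55/4)u(ρ) = 0 on (0,1), and their Wronskian satisfies u₁(ρ)u₂′(ρ) − u₁′(ρ)u₂(ρ) = 105·ρ⁻⁶(1−ρ²)^{−3/2} for all ρ ∈ (0,1); in particular {u₁, u₂} is a fundamental system of solutions on (0,1). -/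

import Mathlib

/-! Writing `u₁ = (1 + ρ)^(-1/2) r` with `r` rational, the product rule for `(1 + ρ)^a f` turns
the ODE and the Wronskian for `u₁` into identities between rational functions, valid on all of
`(-1, 0) ∪ (0, 1)`. The ODE is invariant under the reflection `u ↦ -u(-·)`, and `u₂ = -u₁(-·)`,
so the claims about `u₂` follow from those about `u₁` on `(-1, 0)`. -/

/-- The solution `u₁(ρ) = ρ⁻⁵(1+ρ)^(−1/2)(12 + 6ρ + ρ² + 2ρ³)`. -/
noncomputable def w1 (ρ : ℝ) : ℝ :=
  (ρ ^ 5)⁻¹ * (1 + ρ) ^ (-(1 / 2) : ℝ) * (12 + 6 * ρ + ρ ^ 2 + 2 * ρ ^ 3)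

/-- The solution `u₂(ρ) = ρ⁻⁵(1−ρ)^(−1/2)(12 − 6ρ + ρ² − 2ρ³)`. -/
noncomputable def w2 (ρ : ℝ) : ℝ :=
  (ρ ^ 5)⁻¹ * (1 - ρ) ^ (-(1 / 2) : ℝ) * (12 - 6 * ρ + ρ ^ 2 - 2 * ρ ^ 3)

open Filter Topology

noncomputable def odeOp (u : ℝ → ℝ) (ρ : ℝ) : ℝ :=
  (1 - ρ ^ 2) * deriv (deriv u) ρ + (6 / ρ - 9 * ρ) * deriv u ρ - 55 / 4 * u ρ

theorem deriv_neg_comp_neg (u : ℝ → ℝ) : deriv (fun x ↦ -u (-x)) = fun x ↦ deriv u (-x) := by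
  funext x
  rw [deriv.fun_neg, deriv_comp_neg, neg_neg]

theorem odeOp_neg_comp_neg (u : ℝ → ℝ) (ρ : ℝ) :
    odeOp (fun x ↦ -u (-x)) ρ = -odeOp u (-ρ) := by
  simp only [odeOp, deriv_neg_comp_neg, deriv_comp_neg (deriv u)]
  ring

theorem HasDerivAt.one_add_rpow_mul {f : ℝ → ℝ} {f' x : ℝ} (a : ℝ) (hf : HasDerivAt f f' x)
    (hx : 0 < 1 + x) :
    HasDerivAt (fun y ↦ (1 + y) ^ a * f y) ((1 + x) ^ a * (f' + a * f x / (1 + x))) x := by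
  have hpow := ((hasDerivAt_id' x).const_add 1).rpow_const (p := a) (Or.inl hx.ne')
  refine (hpow.mul hf).congr_deriv ?_
  rw [Real.rpow_sub_one hx.ne']
  field_simp
  ring

theorem deriv_deriv_one_add_rpow_mul {f f' : ℝ → ℝ} {f'' x : ℝ} (a : ℝ)
    (hf : ∀ᶠ y in 𝓝 x, HasDerivAt f (f' y) y) (hf' : HasDerivAt f' f'' x) (hx : 0 < 1 + x) :
    deriv (deriv fun y ↦ (1 + y) ^ a * f y) x =
      (1 + x) ^ a * (f'' + 2 * a * f' x / (1 + x) + a * (a - 1) * f x / (1 + x) ^ 2) := by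
  have hderiv : deriv (fun y ↦ (1 + y) ^ a * f y) =ᶠ[𝓝 x]
      fun y ↦ (1 + y) ^ a * (f' y + a * f y / (1 + y)) := by
    filter_upwards [hf, eventually_gt_nhds (neg_lt_iff_pos_add'.2 hx)] with y hfy hy
    exact (hfy.one_add_rpow_mul a (neg_lt_iff_pos_add'.1 hy)).deriv
  have hquot : HasDerivAt (fun y ↦ f' y + a * (f y / (1 + y)))
      (f'' + a * ((f' x * (1 + x) - f x * 1) / (1 + x) ^ 2)) x :=
    hf'.add ((hf.self_of_nhds.div ((hasDerivAt_id' x).const_add 1) hx.ne').const_mul a)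
  rw [hderiv.deriv_eq]
  convert (hquot.one_add_rpow_mul a hx).deriv using 1
  · simp only [mul_div_assoc]
  field_simp
  ring

noncomputable def w1Rat (x : ℝ) : ℝ := (12 + 6 * x + x ^ 2 + 2 * x ^ 3) / x ^ 5

noncomputable def w1Rat' (x : ℝ) : ℝ := -(60 + 24 * x + 3 * x ^ 2 + 4 * x ^ 3) / x ^ 6

noncomputable def w1Rat'' (x : ℝ) : ℝ := (360 + 120 * x + 12 * x ^ 2 + 12 * x ^ 3) / x ^ 7

theorem hasDerivAt_w1Rat {x : ℝ} (hx : x ≠ 0) : HasDerivAt w1Rat (w1Rat' x) x := by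
  have hnum := ((((hasDerivAt_id' x).const_mul 6).const_add 12).fun_add
    (hasDerivAt_pow 2 x)).fun_add ((hasDerivAt_pow 3 x).const_mul 2)
  refine (hnum.div (hasDerivAt_pow 5 x) (pow_ne_zero 5 hx)).congr_deriv ?_
  norm_num [w1Rat']
  field_simp
  ring

theorem hasDerivAt_w1Rat' {x : ℝ} (hx : x ≠ 0) : HasDerivAt w1Rat' (w1Rat'' x) x := by
  have hnum := (((((hasDerivAt_id' x).const_mul 24).const_add 60).fun_add
    ((hasDerivAt_pow 2 x).const_mul 3)).fun_add ((hasDerivAt_pow 3 x).const_mul 4)).fun_neg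
  refine (hnum.div (hasDerivAt_pow 6 x) (pow_ne_zero 6 hx)).congr_deriv ?_
  norm_num [w1Rat'']
  field_simp
  ring

theorem w1_eq : w1 = fun x ↦ (1 + x) ^ (-(1 / 2) : ℝ) * w1Rat x := by
  funext x
  rw [w1, w1Rat]
  ring

theorem deriv_w1 {x : ℝ} (h1 : 0 < 1 + x) (h0 : x ≠ 0) :
    deriv w1 x = (1 + x) ^ (-(1 / 2) : ℝ) * (w1Rat' x + -(1 / 2) * w1Rat x / (1 + x)) := by
  rw [w1_eq]
  exact ((hasDerivAt_w1Rat h0).one_add_rpow_mul _ h1).deriv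

theorem odeOp_w1 {x : ℝ} (h1 : 0 < 1 + x) (h0 : x ≠ 0) : odeOp w1 x = 0 := by
  have hRat : ∀ᶠ y in 𝓝 x, HasDerivAt w1Rat (w1Rat' y) y := by
    filter_upwards [eventually_ne_nhds h0] with y hy
    exact hasDerivAt_w1Rat hy
  have hdd := deriv_deriv_one_add_rpow_mul (-(1 / 2)) hRat (hasDerivAt_w1Rat' h0) h1
  rw [← w1_eq] at hdd
  have key : (1 - x ^ 2) * (w1Rat'' x + 2 * -(1 / 2) * w1Rat' x / (1 + x) +
      -(1 / 2) * (-(1 / 2) - 1) * w1Rat x / (1 + x) ^ 2) +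
      (6 / x - 9 * x) * (w1Rat' x + -(1 / 2) * w1Rat x / (1 + x)) - 55 / 4 * w1Rat x = 0 := by
    rw [w1Rat, w1Rat', w1Rat'']
    field_simp
    ring
  rw [odeOp, hdd, deriv_w1 h1 h0, w1_eq]
  linear_combination (1 + x) ^ (-(1 / 2) : ℝ) * key

theorem w2_eq_neg_w1_neg : w2 = fun x ↦ -w1 (-x) := by
  funext x
  rw [w1, w2, ← sub_eq_add_neg]
  ring

theorem odeOp_w2 {x : ℝ} (h1 : 0 < 1 - x) (h0 : x ≠ 0) : odeOp w2 x = 0 := by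
  rw [w2_eq_neg_w1_neg, odeOp_neg_comp_neg, odeOp_w1 (by linarith) (neg_ne_zero.2 h0), neg_zero]

theorem wronskian_w1_w2 {ρ : ℝ} (hρ : ρ ∈ Set.Ioo (0 : ℝ) 1) :
    w1 ρ * deriv w2 ρ - deriv w1 ρ * w2 ρ
      = 105 * (ρ ^ 6)⁻¹ * (1 - ρ ^ 2) ^ (-(3 / 2) : ℝ) := by
  obtain ⟨h0, h1⟩ := hρ
  have hp : 0 < 1 + ρ := by linarith
  have hm : 0 < 1 + -ρ := by linarith
  have hsq : 0 < 1 - ρ ^ 2 := by nlinarith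
  have hprod : (1 + ρ) ^ (-(1 / 2) : ℝ) * (1 + -ρ) ^ (-(1 / 2) : ℝ) =
      (1 - ρ ^ 2) ^ (-(1 / 2) : ℝ) := by
    rw [← Real.mul_rpow hp.le hm.le]
    ring_nf
  have hpow : (1 - ρ ^ 2) ^ (-(3 / 2) : ℝ) = (1 - ρ ^ 2) ^ (-(1 / 2) : ℝ) * (1 - ρ ^ 2)⁻¹ := by
    rw [← div_eq_mul_inv, ← Real.rpow_sub_one hsq.ne']
    norm_num
  have key : w1Rat ρ * (w1Rat' (-ρ) + -(1 / 2) * w1Rat (-ρ) / (1 + -ρ)) +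
      (w1Rat' ρ + -(1 / 2) * w1Rat ρ / (1 + ρ)) * w1Rat (-ρ) = 105 * (ρ ^ 6)⁻¹ * (1 - ρ ^ 2)⁻¹ := by
    rw [w1Rat, w1Rat, w1Rat', w1Rat']
    field_simp
    ring
  rw [w2_eq_neg_w1_neg, deriv_neg_comp_neg]
  beta_reduce
  rw [deriv_w1 hp h0.ne', deriv_w1 hm (neg_ne_zero.2 h0.ne'), w1_eq, hpow, ← hprod]
  linear_combination (1 + ρ) ^ (-(1 / 2) : ℝ) * (1 + -ρ) ^ (-(1 / 2) : ℝ) * key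

/-- Both `u₁` and `u₂` solve `(1−ρ²)u″ + (6/ρ − 9ρ)u′ − (55/4)u = 0` on `(0,1)`,
with Wronskian `u₁u₂′ − u₁′u₂ = 105ρ⁻⁶(1−ρ²)^(−3/2)`; in particular they form a
fundamental system on `(0,1)`. -/
theorem stmt_18 :
    (∀ ρ ∈ Set.Ioo (0 : ℝ) 1,
      (1 - ρ ^ 2) * deriv (deriv w1) ρ + (6 / ρ - 9 * ρ) * deriv w1 ρ
        - 55 / 4 * w1 ρ = 0) ∧
    (∀ ρ ∈ Set.Ioo (0 : ℝ) 1,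
      (1 - ρ ^ 2) * deriv (deriv w2) ρ + (6 / ρ - 9 * ρ) * deriv w2 ρ
        - 55 / 4 * w2 ρ = 0) ∧
    (∀ ρ ∈ Set.Ioo (0 : ℝ) 1,
      w1 ρ * deriv w2 ρ - deriv w1 ρ * w2 ρ
        = 105 * (ρ ^ 6)⁻¹ * (1 - ρ ^ 2) ^ (-(3 / 2) : ℝ)) :=
  ⟨fun _ hρ ↦ odeOp_w1 (by linarith [hρ.1]) hρ.1.ne',
    fun _ hρ ↦ odeOp_w2 (by linarith [hρ.2]) hρ.1.ne', fun _ ↦ wronskian_w1_w2⟩
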